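/- arXiv:1711.04466 — 3 statements merged into one kernel-verified Lean document; each statement's English description precedes it below -/
import Mathlib

section
/- Let Y be a discrete random variable and T a finite set of discrete random variables with Y ∉ T, with joint probability mass function f. Let Θ denote the set of all Markov boundaries of Y within T. Suppose X ∈ (⋃_{M ∈ Θ} M) \ (⋂_{M ∈ Θ} M), and let K = T \ {X}. Then X and K are variation dependent: there exist a value x of X and a value k of the collection K such that f(x) > 0, f(k) > 0, but f(x, k) = 0. -/
/-! A Markov boundary avoiding `X` lies inside `K = T \ {X}`, so by weak union `K` is a Markov
blanket: `y ⊥ X | K`. If the support of `(X, K)` were the product of the supports of `X` and of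
`K`, the intersection property of conditional independence would hold, and combined with a
Markov boundary `M ∋ X` it would make `M \ {X}` a Markov blanket, against the minimality of `M`. -/

open scoped BigOperators

noncomputable section

/-- `p` is a probability mass function on the finite type `Ω`. -/
def IsDist {Ω : Type*} [Fintype Ω] (p : Ω → ℝ) : Prop :=
  (∀ w, 0 ≤ p w) ∧ ∑ w, p w = 1

/-- Total variation distance between two distributions on the same finite type. -/
def tvDist {Ω : Type*} [Fintype Ω] (p q : Ω → ℝ) : ℝ :=
  (∑ w, |p w - q w|) / 2

variable {ι : Type*} [Fintype ι] [DecidableEq ι]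
variable {α : ι → Type*} [∀ i, Fintype (α i)] [∀ i, DecidableEq (α i)]

/-- Marginal probability, under joint pmf `p`, of the event that the variables in the
collection `A` take the values prescribed by the configuration `x`. -/
def margProb (p : (∀ i, α i) → ℝ) (A : Finset ι) (x : ∀ i, α i) : ℝ :=
  ∑ w : ∀ i, α i, if ∀ i ∈ A, w i = x i then p w else 0

/-- Conditional independence of the collections `A` and `B` given the collection `C`:
`f(a, b | c) = f(a | c) f(b | c)` whenever `f(c) > 0` (stated in multiplied-out form). -/
def CondIndep (p : (∀ i, α i) → ℝ) (A B C : Finset ι) : Prop :=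
  ∀ x : ∀ i, α i, 0 < margProb p C x →
    margProb p (A ∪ B ∪ C) x * margProb p C x =
      margProb p (A ∪ C) x * margProb p (B ∪ C) x

/-- `M` is a Markov blanket of the variable `y` within the collection `T`. -/
def MarkovBlanket (p : (∀ i, α i) → ℝ) (y : ι) (T M : Finset ι) : Prop :=
  M ⊆ T ∧ CondIndep p {y} (T \ M) M

/-- `M` is a Markov boundary of `y` within `T`: a Markov blanket no proper subset of
which is a Markov blanket. -/
def MarkovBoundary (p : (∀ i, α i) → ℝ) (y : ι) (T M : Finset ι) : Prop :=
  MarkovBlanket p y T M ∧ ∀ M' ⊂ M, ¬ MarkovBlanket p y T M'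

/-- Mutual information between the collections `A` and `B`
(with the convention `0 · log(junk) = 0` on zero-probability terms). -/
def MI (p : (∀ i, α i) → ℝ) (A B : Finset ι) : ℝ :=
  ∑ w : ∀ i, α i, p w *
    Real.log (margProb p (A ∪ B) w / (margProb p A w * margProb p B w))

/-- Conditional mutual information between collections `A` and `B` given `C`
(with the convention `0 · log(junk) = 0` on zero-probability terms). -/
def CMI (p : (∀ i, α i) → ℝ) (A B C : Finset ι) : ℝ :=
  ∑ w : (∀ i, α i), p w *
    Real.log ((margProb p (A ∪ B ∪ C) w * margProb p C w) /
      (margProb p (A ∪ C) w * margProb p (B ∪ C) w))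


section MarkovBlanket

variable {p : (∀ i, α i) → ℝ}

lemma margProb_nonneg (hp : ∀ w, 0 ≤ p w) (A : Finset ι) (x : ∀ i, α i) :
    0 ≤ margProb p A x :=
  Finset.sum_nonneg fun w _ => by split_ifs <;> simp [hp w]

lemma margProb_anti (hp : ∀ w, 0 ≤ p w) {A B : Finset ι} (hAB : A ⊆ B) (x : ∀ i, α i) :
    margProb p B x ≤ margProb p A x :=
  Finset.sum_le_sum fun w _ => by
    split_ifs with hB hA
    · rfl
    · exact absurd (fun i hi => hB i (hAB hi)) hA
    · exact hp w
    · rfl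

lemma margProb_eq_zero_of_subset (hp : ∀ w, 0 ≤ p w) {A B : Finset ι} (hAB : A ⊆ B)
    {x : ∀ i, α i} (h : margProb p A x = 0) : margProb p B x = 0 :=
  le_antisymm (h ▸ margProb_anti hp hAB x) (margProb_nonneg hp B x)

lemma le_margProb (hp : ∀ w, 0 ≤ p w) (A : Finset ι) (w : ∀ i, α i) :
    p w ≤ margProb p A w := by
  simpa [margProb] using Finset.single_le_sum
    (f := fun w' : ∀ i, α i => if ∀ i ∈ A, w' i = w i then p w' else 0)
    (fun v _ => by split_ifs <;> simp [hp v]) (Finset.mem_univ w)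

lemma exists_pos_of_margProb_pos {A : Finset ι} {x : ∀ i, α i} (h : 0 < margProb p A x) :
    ∃ w, 0 < p w ∧ ∀ i ∈ A, w i = x i := by
  unfold margProb at h
  obtain ⟨w, -, hw⟩ := Finset.exists_lt_of_sum_lt (f := fun _ => (0 : ℝ)) (by simpa using h)
  split_ifs at hw with hwA
  exacts [⟨w, hw, hwA⟩, absurd hw (lt_irrefl 0)]

lemma margProb_congr {A : Finset ι} {x x' : ∀ i, α i} (h : ∀ i ∈ A, x i = x' i) :
    margProb p A x = margProb p A x' :=
  Finset.sum_congr rfl fun _ _ => if_congr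
    ⟨fun hw i hi => (hw i hi).trans (h i hi), fun hw i hi => (hw i hi).trans (h i hi).symm⟩
    rfl rfl

/-- Each `v` in the sum represents one `B`-pattern extending the `A`-pattern of `w`. -/
lemma margProb_eq_sum_margProb {A B : Finset ι} (hAB : A ⊆ B) (w : ∀ i, α i) :
    margProb p A w = ∑ v with ∀ i, i ∈ A ∨ i ∉ B → v i = w i, margProb p B v := by
  unfold margProb
  rw [Finset.sum_comm]
  refine Finset.sum_congr rfl fun u _ => Eq.symm ?_
  by_cases huA : ∀ i ∈ A, u i = w i
  · rw [if_pos huA]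
    refine (Finset.sum_eq_single_of_mem (fun i => if i ∈ B then u i else w i) ?_ ?_).trans ?_
    · refine Finset.mem_filter.2 ⟨Finset.mem_univ _, fun i hi => ?_⟩
      dsimp only
      split_ifs with hiB
      exacts [huA i (hi.resolve_right (not_not.2 hiB)), rfl]
    · intro v hv hne
      refine if_neg fun huv => hne (funext fun i => ?_)
      split_ifs with hiB
      exacts [(huv i hiB).symm, (Finset.mem_filter.1 hv).2 i (Or.inr hiB)]
    · exact if_pos fun i hi => (if_pos hi).symm
  · rw [if_neg huA]
    refine Finset.sum_eq_zero fun v hv => if_neg fun huv => huA fun i hi => ?_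
    rw [huv i (hAB hi)]
    exact (Finset.mem_filter.1 hv).2 i (Or.inl hi)

lemma mul_margProb_union_eq_of_forall_agree {Y A B : Finset ι} (hYB : Disjoint Y B)
    (hAB : A ⊆ B) {q r : ℝ} {w : ∀ i, α i}
    (h : ∀ v, (∀ i ∈ Y ∪ A, v i = w i) →
      q * margProb p (Y ∪ B) v = r * margProb p B v) :
    q * margProb p (Y ∪ A) w = r * margProb p A w := by
  rw [margProb_eq_sum_margProb (Finset.union_subset_union_right hAB),
    margProb_eq_sum_margProb hAB, Finset.mul_sum, Finset.mul_sum]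
  have hfilter : ∀ i, i ∈ Y ∪ A ∨ i ∉ Y ∪ B ↔ i ∈ A ∨ i ∉ B := fun i => by
    have : i ∈ Y → i ∉ B := fun hi => Finset.disjoint_left.1 hYB hi
    simp only [Finset.mem_union]
    tauto
  simp_rw [hfilter]
  exact Finset.sum_congr rfl fun v hv => h v fun i hi =>
    (Finset.mem_filter.1 hv).2 i ((hfilter i).1 (Or.inl hi))

variable {y : ι} {T M K : Finset ι}

lemma markovBlanket_iff (hp : ∀ w, 0 ≤ p w) :
    MarkovBlanket p y T M ↔ M ⊆ T ∧ ∀ x,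
      margProb p ({y} ∪ T) x * margProb p M x = margProb p ({y} ∪ M) x * margProb p T x := by
  unfold MarkovBlanket CondIndep
  refine and_congr_right fun hMT => ?_
  rw [Finset.union_assoc, Finset.sdiff_union_of_subset hMT]
  refine ⟨fun h x => ?_, fun h x _ => h x⟩
  rcases (margProb_nonneg hp M x).eq_or_lt with hM0 | hMpos
  · rw [← hM0, margProb_eq_zero_of_subset hp hMT hM0.symm, mul_zero, mul_zero]
  · exact h x hMpos

theorem MarkovBlanket.mono (hp : ∀ w, 0 ≤ p w) (hyT : y ∉ T) (hM : MarkovBlanket p y T M)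
    (hMK : M ⊆ K) (hKT : K ⊆ T) : MarkovBlanket p y T K := by
  rw [markovBlanket_iff hp] at hM ⊢
  refine ⟨hKT, fun w => ?_⟩
  have hfiber : margProb p M w * margProb p ({y} ∪ K) w =
      margProb p ({y} ∪ M) w * margProb p K w := by
    refine mul_margProb_union_eq_of_forall_agree (Finset.disjoint_singleton_left.2 hyT) hKT
      fun v hv => ?_
    have hMv : margProb p M v = margProb p M w :=
      margProb_congr fun i hi => hv i (Finset.mem_union_right _ (hMK hi))
    have hyMv : margProb p ({y} ∪ M) v = margProb p ({y} ∪ M) w :=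
      margProb_congr fun i hi => hv i (Finset.union_subset_union_right hMK hi)
    have hMv' := hM.2 v
    rw [hMv, hyMv] at hMv'
    linear_combination hMv'
  rcases (margProb_nonneg hp M w).eq_or_lt with hM0 | hMpos
  · have hK0 := margProb_eq_zero_of_subset hp hMK hM0.symm
    rw [hK0, margProb_eq_zero_of_subset hp hKT hK0, mul_zero, mul_zero]
  · refine mul_left_cancel₀ hMpos.ne' ?_
    linear_combination margProb p K w * hM.2 w - margProb p T w * hfiber

lemma mul_margProb_erase_eq_of_agree {X : ι} (hp : ∀ w, 0 ≤ p w) (hyT : y ∉ T)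
    (hXM : X ∈ M) (hM : MarkovBlanket p y T M) (hK : MarkovBlanket p y T (T.erase X))
    (hsupp : ∀ u v : ∀ i, α i, 0 < margProb p {X} u → 0 < margProb p (T.erase X) v →
      0 < margProb p T (Function.update v X (u X)))
    {w₀ v : ∀ i, α i} (hw₀ : 0 < p w₀) (hv : ∀ i ∈ M.erase X, v i = w₀ i) :
    margProb p M w₀ * margProb p ({y} ∪ T.erase X) v =
      margProb p ({y} ∪ M) (Function.update w₀ y (v y)) * margProb p (T.erase X) v := by
  have hMy : ∀ i ∈ M, i ≠ y := fun i hi hiy => hyT (hiy ▸ hM.1 hi)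
  have hyX : y ≠ X := (hMy X hXM).symm
  rw [markovBlanket_iff hp] at hM hK
  rcases (margProb_nonneg hp (T.erase X) v).eq_or_lt with hK0 | hKpos
  · rw [← hK0, margProb_eq_zero_of_subset hp Finset.subset_union_right hK0.symm, mul_zero,
      mul_zero]
  -- Moved to the `X`-value of `w₀`, `v` stays in the support, and there both blankets apply
  -- with `f(M)` and `f(y, M)` frozen at their values at `w₀`.
  set v' := Function.update v X (w₀ X) with hv'
  have hTpos : 0 < margProb p T v' := hsupp w₀ v (hw₀.trans_le (le_margProb hp _ _)) hKpos
  have hv'y : ∀ i ∈ {y} ∪ T.erase X, v' i = v i := fun i hi => by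
    refine Function.update_of_ne (fun hiX => ?_) _ _
    rcases Finset.mem_union.1 hi with hi | hi
    · exact hyX ((Finset.mem_singleton.1 hi).symm.trans hiX)
    · exact Finset.ne_of_mem_erase hi hiX
  have hv'M : ∀ i ∈ {y} ∪ M, v' i = Function.update w₀ y (v y) i := fun i hi => by
    rw [hv']
    rcases Finset.mem_union.1 hi with hi | hi
    · rw [Finset.mem_singleton.1 hi, Function.update_of_ne hyX, Function.update_self]
    · rw [Function.update_of_ne (hMy i hi)]
      by_cases hiX : i = X
      · rw [hiX, Function.update_self]
      · rw [Function.update_of_ne hiX, hv i (Finset.mem_erase.2 ⟨hiX, hi⟩)]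
  have hMv' : margProb p M v' = margProb p M w₀ :=
    (margProb_congr fun i hi => hv'M i (Finset.mem_union_right _ hi)).trans
      (margProb_congr fun i hi => Function.update_of_ne (hMy i hi) _ _)
  have hK := hK.2 v'
  have hM := hM.2 v'
  rw [margProb_congr hv'y, margProb_congr fun i hi => hv'y i (Finset.mem_union_right _ hi)] at hK
  rw [hMv', margProb_congr hv'M] at hM
  refine mul_right_cancel₀ hTpos.ne' ?_
  linear_combination margProb p (T.erase X) v * hM - margProb p M w₀ * hK

theorem MarkovBlanket.erase_of_support {X : ι} (hp : ∀ w, 0 ≤ p w) (hyT : y ∉ T)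
    (hXM : X ∈ M) (hM : MarkovBlanket p y T M) (hK : MarkovBlanket p y T (T.erase X))
    (hsupp : ∀ u v : ∀ i, α i, 0 < margProb p {X} u → 0 < margProb p (T.erase X) v →
      0 < margProb p T (Function.update v X (u X))) :
    MarkovBlanket p y T (M.erase X) := by
  have hCT : M.erase X ⊆ T := (Finset.erase_subset X M).trans hM.1
  have hCK : M.erase X ⊆ T.erase X := Finset.erase_subset_erase X hM.1
  refine (markovBlanket_iff hp).2 ⟨hCT, fun w => ?_⟩
  rcases (margProb_nonneg hp (M.erase X) w).eq_or_lt with hC0 | hCpos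
  · rw [← hC0, margProb_eq_zero_of_subset hp hCT hC0.symm, mul_zero, mul_zero]
  obtain ⟨w₀, hw₀, hw₀C⟩ := exists_pos_of_margProb_pos hCpos
  set q := margProb p M w₀
  set r := margProb p ({y} ∪ M) (Function.update w₀ y (w y))
  have hq : 0 < q := hw₀.trans_le (le_margProb hp M w₀)
  have hfiber : ∀ v, (∀ i ∈ {y} ∪ M.erase X, v i = w i) →
      q * margProb p ({y} ∪ T.erase X) v = r * margProb p (T.erase X) v := fun v hv => by
    have h := mul_margProb_erase_eq_of_agree hp hyT hXM hM hK hsupp hw₀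
      fun i hi => (hv i (Finset.mem_union_right _ hi)).trans (hw₀C i hi).symm
    rwa [hv y (Finset.mem_union_left _ (Finset.mem_singleton_self y))] at h
  have hC : q * margProb p ({y} ∪ M.erase X) w = r * margProb p (M.erase X) w :=
    mul_margProb_union_eq_of_forall_agree
      (Finset.disjoint_singleton_left.2 fun hy => hyT (Finset.mem_of_mem_erase hy)) hCK hfiber
  have hT : q * margProb p ({y} ∪ T) w = r * margProb p T w := by
    rcases (margProb_nonneg hp (T.erase X) w).eq_or_lt with hK0 | hKpos
    · have hT0 := margProb_eq_zero_of_subset hp (Finset.erase_subset X T) hK0.symm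
      rw [hT0, margProb_eq_zero_of_subset hp Finset.subset_union_right hT0, mul_zero, mul_zero]
    · refine mul_right_cancel₀ hKpos.ne' ?_
      linear_combination q * ((markovBlanket_iff hp).1 hK).2 w +
        margProb p T w * hfiber w fun _ _ => rfl
  refine mul_left_cancel₀ hq.ne' ?_
  linear_combination margProb p (M.erase X) w * hT - margProb p T w * hC

end MarkovBlanket

variable [∀ i, Nonempty (α i)]

/-- Lemma 1: if `X` belongs to some but not every Markov boundary of `Y`
within `T`, then `X` and `K = T \ {X}` are variation dependent: there are a value `u X`
of `X` and a value `v` of the collection `K` each of positive marginal probability whose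
combination has zero probability. -/
theorem markov_boundary_multiplicity_variation_dependent
    (p : (∀ i, α i) → ℝ) (hp : IsDist p)
    (y X : ι) (T : Finset ι) (hyT : y ∉ T)
    (hin : ∃ M, MarkovBoundary p y T M ∧ X ∈ M)
    (hout : ∃ M, MarkovBoundary p y T M ∧ X ∉ M) :
    ∃ u v : ∀ i, α i,
      0 < margProb p {X} u ∧
      0 < margProb p (T.erase X) v ∧
      margProb p (insert X (T.erase X)) (Function.update v X (u X)) = 0 := by
  obtain ⟨M₁, hM₁, hXM₁⟩ := hin
  obtain ⟨M₂, hM₂, hXM₂⟩ := hout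
  by_contra hsupp
  push Not at hsupp
  have hK : MarkovBlanket p y T (T.erase X) :=
    hM₂.1.mono hp.1 hyT (Finset.subset_erase.2 ⟨hM₂.1.1, hXM₂⟩) (Finset.erase_subset X T)
  refine hM₁.2 _ (Finset.erase_ssubset hXM₁) (hM₁.1.erase_of_support hp.1 hyT hXM₁ hK
    fun u v hu hv => ?_)
  rw [← Finset.insert_erase (hM₁.1.1 hXM₁)]
  exact (margProb_nonneg hp.1 _ _).lt_of_ne' (hsupp u v hu hv)
end
end

section
/- (Strict data processing inequality, discrete case.) Let X and Y be discrete random variables and S₁ a collection of discrete random variables not containing X or Y. For 0 < ε ≤ 1, let X^ε be the ε-noise perturbation of X. Then CMI(X^ε, Y | S₁) ≤ CMI(X, Y | S₁), and equality holds if and only if CMI(X, Y | S₁) = 0. -/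
open scoped BigOperators

noncomputable section

variable {𝕏 𝕐 𝕊 : Type*} [Fintype 𝕏] [Fintype 𝕐] [Fintype 𝕊]
  [Nonempty 𝕏] [Nonempty 𝕐] [Nonempty 𝕊]

/-- Marginal pmf of the conditioning collection `S₁`. -/
def fS (p : 𝕏 × 𝕐 × 𝕊 → ℝ) (s : 𝕊) : ℝ := ∑ x, ∑ y, p (x, y, s)

/-- Marginal pmf of `(X, S₁)`. -/
def fXS (p : 𝕏 × 𝕐 × 𝕊 → ℝ) (x : 𝕏) (s : 𝕊) : ℝ := ∑ y, p (x, y, s)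

/-- Marginal pmf of `(Y, S₁)`. -/
def fYS (p : 𝕏 × 𝕐 × 𝕊 → ℝ) (y : 𝕐) (s : 𝕊) : ℝ := ∑ x, p (x, y, s)

/-- Conditional mutual information `CMI(X, Y | S₁)`
(with the convention `0 · log(junk) = 0` on zero-probability terms). -/
def CMI3 (p : 𝕏 × 𝕐 × 𝕊 → ℝ) : ℝ :=
  ∑ x, ∑ y, ∑ s, p (x, y, s) *
    Real.log ((p (x, y, s) * fS p s) / (fXS p x s * fYS p y s))

/-- Joint pmf of `(X^ε, Y, S₁)`, where `X^ε` equals `X` with probability `1 - ε` and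
otherwise equals an independent noise variable with pmf `qU`: the noise variable and the
Bernoulli(ε) switching indicator are jointly independent of `(X, Y, S₁)`. -/
def epsNoise (p : 𝕏 × 𝕐 × 𝕊 → ℝ) (qU : 𝕏 → ℝ) (ε : ℝ) : 𝕏 × 𝕐 × 𝕊 → ℝ :=
  fun w => (1 - ε) * p w + ε * qU w.1 * fYS p w.2.1 w.2.2

/-! Conditional mutual information is the relative entropy of `f` with respect to the
conditionally independent pmf `f(x | s) f(y | s) f(s)`. Noising `X` leaves the law of
`(Y, S₁)` unchanged, so both `f` and this pmf turn into mixtures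
`(1 - ε) · (old) + ε · qU(x) f(y, s)` with the same second component. The log-sum inequality
(joint convexity of `(a, b) ↦ a log (a / b)`) therefore gives
`CMI(X^ε, Y | S₁) ≤ (1 - ε) CMI(X, Y | S₁)`; together with `CMI ≥ 0` and `ε > 0` this yields
both the inequality and the equality case. -/

open Real

lemma sub_le_mul_log_div {a b : ℝ} (ha : 0 ≤ a) (hb : 0 ≤ b) (hab : b = 0 → a = 0) :
    a - b ≤ a * log (a / b) := by
  rcases ha.eq_or_lt with rfl | ha
  · simpa using hb
  have hb : 0 < b := hb.lt_of_ne fun h => ha.ne' (hab h.symm)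
  calc a - b = a * (1 - (a / b)⁻¹) := by field_simp
    _ ≤ a * log (a / b) := by gcongr; exact one_sub_inv_le_log_of_pos (by positivity)

lemma add_mul_log_add_div_add_le {a₁ a₂ b₁ b₂ : ℝ} (ha₁ : 0 ≤ a₁) (ha₂ : 0 ≤ a₂)
    (hb₁ : 0 ≤ b₁) (hb₂ : 0 ≤ b₂) (h₁ : b₁ = 0 → a₁ = 0) (h₂ : b₂ = 0 → a₂ = 0) :
    (a₁ + a₂) * log ((a₁ + a₂) / (b₁ + b₂)) ≤ a₁ * log (a₁ / b₁) + a₂ * log (a₂ / b₂) := by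
  rcases hb₁.eq_or_lt with rfl | hb₁
  · simp [h₁ rfl]
  rcases hb₂.eq_or_lt with rfl | hb₂
  · simp [h₂ rfl]
  have hB : 0 < b₁ + b₂ := by positivity
  -- Jensen for `x ↦ x log x` at the points `aᵢ / bᵢ` with weights `bᵢ / (b₁ + b₂)`
  have hconv := convexOn_mul_log.2 (Set.mem_Ici.2 (div_nonneg ha₁ hb₁.le))
    (Set.mem_Ici.2 (div_nonneg ha₂ hb₂.le)) (div_nonneg hb₁.le hB.le)
    (div_nonneg hb₂.le hB.le) (by field_simp)
  have hmean : b₁ / (b₁ + b₂) * (a₁ / b₁) + b₂ / (b₁ + b₂) * (a₂ / b₂) =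
      (a₁ + a₂) / (b₁ + b₂) := by
    field_simp
  simp only [smul_eq_mul, hmean] at hconv
  refine (Eq.trans_le ?_ (mul_le_mul_of_nonneg_left hconv hB.le)).trans_eq ?_ <;> field_simp

lemma mul_log_div_mix_le {θ a b c : ℝ} (hθ : 0 ≤ θ) (ha : 0 ≤ a) (hb : 0 ≤ b) (hc : 0 ≤ c)
    (hab : b = 0 → a = 0) :
    (θ * a + c) * log ((θ * a + c) / (θ * b + c)) ≤ θ * (a * log (a / b)) := by
  have hθab : θ * b = 0 → θ * a = 0 := fun h => by
    rcases mul_eq_zero.1 h with h | h <;> simp [h, hab]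
  refine (add_mul_log_add_div_add_le (by positivity) hc (by positivity) hc hθab id).trans_eq ?_
  have hc_log : c * log (c / c) = 0 := by rcases eq_or_ne c 0 with h | h <;> simp [h]
  rcases eq_or_ne θ 0 with rfl | hθ
  · simp
  · rw [mul_div_mul_left _ _ hθ, hc_log, add_zero, mul_assoc]

section
omit [Nonempty 𝕏] [Nonempty 𝕐] [Nonempty 𝕊]

section marginals
omit [Fintype 𝕊]

/-- The pmf `f(x | s) f(y | s) f(s)` of the coupling in which `X ⊥ Y | S₁` and the pairs
`(X, S₁)`, `(Y, S₁)` keep their laws under `p`. -/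
def condIndepPmf (p : 𝕏 × 𝕐 × 𝕊 → ℝ) (w : 𝕏 × 𝕐 × 𝕊) : ℝ :=
  fXS p w.1 w.2.2 * fYS p w.2.1 w.2.2 / fS p w.2.2

lemma sum_fXS (p : 𝕏 × 𝕐 × 𝕊 → ℝ) (s : 𝕊) : ∑ x, fXS p x s = fS p s := rfl

lemma sum_fYS (p : 𝕏 × 𝕐 × 𝕊 → ℝ) (s : 𝕊) : ∑ y, fYS p y s = fS p s := Finset.sum_comm

lemma fS_condIndepPmf (p : 𝕏 × 𝕐 × 𝕊 → ℝ) (s : 𝕊) : fS (condIndepPmf p) s = fS p s := by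
  change ∑ x, ∑ y, fXS p x s * fYS p y s / fS p s = fS p s
  simp_rw [← Finset.sum_div, ← Finset.mul_sum, ← Finset.sum_mul, sum_fXS, sum_fYS,
    mul_self_div_self]

section nonneg
variable {p : 𝕏 × 𝕐 × 𝕊 → ℝ} (hp : ∀ w, 0 ≤ p w)
include hp

lemma fYS_le_fS (y : 𝕐) (s : 𝕊) : fYS p y s ≤ fS p s :=
  sum_fYS p s ▸ Finset.single_le_sum (fun y' _ => Finset.sum_nonneg fun x _ => hp (x, y', s))
    (Finset.mem_univ y)

lemma condIndepPmf_nonneg (w : 𝕏 × 𝕐 × 𝕊) : 0 ≤ condIndepPmf p w :=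
  div_nonneg (mul_nonneg (Finset.sum_nonneg fun _ _ => hp _) (Finset.sum_nonneg fun _ _ => hp _))
    (Finset.sum_nonneg fun _ _ => Finset.sum_nonneg fun _ _ => hp _)

lemma eq_zero_of_condIndepPmf_eq_zero {w : 𝕏 × 𝕐 × 𝕊} (hw : condIndepPmf p w = 0) :
    p w = 0 := by
  obtain ⟨x, y, s⟩ := w
  by_contra hne
  have hpos := (hp (x, y, s)).lt_of_ne' hne
  have hX : 0 < fXS p x s :=
    hpos.trans_le (Finset.single_le_sum (fun y' _ => hp (x, y', s)) (Finset.mem_univ y))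
  have hY : 0 < fYS p y s :=
    hpos.trans_le (Finset.single_le_sum (fun x' _ => hp (x', y, s)) (Finset.mem_univ x))
  exact (div_pos (mul_pos hX hY) (hY.trans_le (fYS_le_fS hp y s))).ne' hw

end nonneg

section epsNoise
variable (p : 𝕏 × 𝕐 × 𝕊 → ℝ) {qU : 𝕏 → ℝ} (hqU1 : ∑ x, qU x = 1) (ε : ℝ)

omit [Fintype 𝕐] in
include hqU1 in
lemma fYS_epsNoise (y : 𝕐) (s : 𝕊) : fYS (epsNoise p qU ε) y s = fYS p y s := by
  simp only [fYS, epsNoise, Finset.sum_add_distrib, ← Finset.mul_sum, ← Finset.sum_mul, hqU1]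
  ring

include hqU1 in
lemma fS_epsNoise (s : 𝕊) : fS (epsNoise p qU ε) s = fS p s := by
  simp only [← sum_fYS, fYS_epsNoise p hqU1]

lemma fXS_epsNoise (x : 𝕏) (s : 𝕊) :
    fXS (epsNoise p qU ε) x s = (1 - ε) * fXS p x s + ε * qU x * fS p s := by
  simp only [fXS, epsNoise, Finset.sum_add_distrib, ← Finset.mul_sum, sum_fYS]

include hqU1 in
lemma condIndepPmf_epsNoise (hp : ∀ w, 0 ≤ p w) (w : 𝕏 × 𝕐 × 𝕊) :
    condIndepPmf (epsNoise p qU ε) w =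
      (1 - ε) * condIndepPmf p w + ε * qU w.1 * fYS p w.2.1 w.2.2 := by
  obtain ⟨x, y, s⟩ := w
  simp only [condIndepPmf, fXS_epsNoise, fYS_epsNoise p hqU1, fS_epsNoise p hqU1]
  rcases eq_or_ne (fS p s) 0 with hS | hS
  · have hY : fYS p y s = 0 :=
      le_antisymm (hS ▸ fYS_le_fS hp y s) (Finset.sum_nonneg fun _ _ => hp _)
    simp [hS, hY]
  · field_simp

end epsNoise

omit [Fintype 𝕐] in
lemma epsNoise_nonneg {p : 𝕏 × 𝕐 × 𝕊 → ℝ} {qU : 𝕏 → ℝ} {ε : ℝ} (hp : ∀ w, 0 ≤ p w)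
    (hqU : ∀ x, 0 ≤ qU x) (hε0 : 0 ≤ ε) (hε1 : ε ≤ 1) (w : 𝕏 × 𝕐 × 𝕊) : 0 ≤ epsNoise p qU ε w :=
  add_nonneg (mul_nonneg (sub_nonneg.2 hε1) (hp w))
    (mul_nonneg (mul_nonneg hε0 (hqU _)) (Finset.sum_nonneg fun _ _ => hp _))

end marginals

lemma CMI3_eq_sum_mul_log_div (p : 𝕏 × 𝕐 × 𝕊 → ℝ) :
    CMI3 p = ∑ w, p w * log (p w / condIndepPmf p w) := by
  simp only [CMI3, condIndepPmf, Fintype.sum_prod_type, div_div_eq_mul_div]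

lemma sum_fS (p : 𝕏 × 𝕐 × 𝕊 → ℝ) : ∑ s, fS p s = ∑ w, p w := by
  simp only [fS, Fintype.sum_prod_type]
  rw [Finset.sum_comm]
  exact Finset.sum_congr rfl fun x _ => Finset.sum_comm

lemma sum_condIndepPmf (p : 𝕏 × 𝕐 × 𝕊 → ℝ) : ∑ w, condIndepPmf p w = ∑ w, p w := by
  simp only [← sum_fS, fS_condIndepPmf]

lemma CMI3_nonneg {p : 𝕏 × 𝕐 × 𝕊 → ℝ} (hp : ∀ w, 0 ≤ p w) : 0 ≤ CMI3 p := by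
  rw [CMI3_eq_sum_mul_log_div]
  calc (0 : ℝ) = ∑ w, (p w - condIndepPmf p w) := by
        rw [Finset.sum_sub_distrib, sum_condIndepPmf, sub_self]
    _ ≤ _ := Finset.sum_le_sum fun w _ => sub_le_mul_log_div (hp w) (condIndepPmf_nonneg hp w)
        (eq_zero_of_condIndepPmf_eq_zero hp)

lemma CMI3_epsNoise_le {p : 𝕏 × 𝕐 × 𝕊 → ℝ} {qU : 𝕏 → ℝ} {ε : ℝ} (hp : ∀ w, 0 ≤ p w)
    (hqU : ∀ x, 0 ≤ qU x) (hqU1 : ∑ x, qU x = 1) (hε0 : 0 ≤ ε) (hε1 : ε ≤ 1) :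
    CMI3 (epsNoise p qU ε) ≤ (1 - ε) * CMI3 p := by
  simp only [CMI3_eq_sum_mul_log_div, Finset.mul_sum, condIndepPmf_epsNoise p hqU1 ε hp]
  exact Finset.sum_le_sum fun w _ => mul_log_div_mix_le (sub_nonneg.2 hε1) (hp w)
    (condIndepPmf_nonneg hp w)
    (mul_nonneg (mul_nonneg hε0 (hqU _)) (Finset.sum_nonneg fun _ _ => hp _))
    (eq_zero_of_condIndepPmf_eq_zero hp)

end

/-- Lemma 3, strict data processing inequality, discrete case: for
`0 < ε ≤ 1` and a noise pmf `qU` positive on a finite value set containing the range of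
`X`, one has `CMI(X^ε, Y | S₁) ≤ CMI(X, Y | S₁)`, with equality iff
`CMI(X, Y | S₁) = 0`. -/
theorem strict_data_processing_inequality
    (p : 𝕏 × 𝕐 × 𝕊 → ℝ) (hp : IsDist p)
    (qU : 𝕏 → ℝ) (hqU : ∀ x, 0 < qU x) (hqU1 : ∑ x, qU x = 1)
    (ε : ℝ) (hε0 : 0 < ε) (hε1 : ε ≤ 1) :
    CMI3 (epsNoise p qU ε) ≤ CMI3 p ∧
      (CMI3 (epsNoise p qU ε) = CMI3 p ↔ CMI3 p = 0) := by
  have hqU0 : ∀ x, 0 ≤ qU x := fun x => (hqU x).le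
  have hcontract := CMI3_epsNoise_le hp.1 hqU0 hqU1 hε0.le hε1
  have hI := CMI3_nonneg hp.1
  have hIε := CMI3_nonneg (epsNoise_nonneg hp.1 hqU0 hε0.le hε1)
  refine ⟨by nlinarith, fun h => ?_, fun h => ?_⟩
  · nlinarith
  · rw [h] at hcontract ⊢
    linarith

end
end

section
/- Let Y be a discrete random variable and S a finite set of discrete random variables with Y ∉ S. If W ∈ S is not essential for Y (i.e., Y is conditionally independent of W given S \ {W}), then there exists a Markov boundary of Y within S that does not contain W. -/
open scoped BigOperators

noncomputable section

variable {ι : Type*} [Fintype ι] [DecidableEq ι]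
variable {α : ι → Type*} [∀ i, Fintype (α i)] [∀ i, DecidableEq (α i)]

section MarkovBoundary

variable {p : (∀ i, α i) → ℝ} {y : ι} {T M : Finset ι}

theorem markovBoundary_iff_minimal :
    MarkovBoundary p y T M ↔ Minimal (MarkovBlanket p y T) M := by
  rw [minimal_iff_forall_lt]
  rfl

theorem MarkovBlanket.exists_markovBoundary_subset (hM : MarkovBlanket p y T M) :
    ∃ M' ⊆ M, MarkovBoundary p y T M' := by
  simp_rw [markovBoundary_iff_minimal]
  exact exists_minimal_le_of_wellFoundedLT _ M hM

theorem markovBlanket_erase_of_condIndep {W : ι} (hWT : W ∈ T)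
    (hness : CondIndep p {y} {W} (T.erase W)) :
    MarkovBlanket p y T (T.erase W) :=
  ⟨T.erase_subset W, by rwa [Finset.sdiff_erase_self hWT]⟩

end MarkovBoundary

variable [∀ i, Nonempty (α i)]

theorem non_essential_avoided_by_some_markov_boundary_general
    (p : (∀ i, α i) → ℝ)
    (y : ι) (S : Finset ι)
    (W : ι) (hWS : W ∈ S)
    (hness : CondIndep p {y} {W} (S.erase W)) :
    ∃ M, MarkovBoundary p y S M ∧ W ∉ M := by
  obtain ⟨M, hMsub, hM⟩ :=
    (markovBlanket_erase_of_condIndep hWS hness).exists_markovBoundary_subset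
  exact ⟨M, hM, fun hWM => S.notMem_erase W (hMsub hWM)⟩

/-- other half of Lemma 5: if `W ∈ S` is not essential for `Y`, then
some Markov boundary of `Y` within `S` does not contain `W`. -/
theorem non_essential_avoided_by_some_markov_boundary
    (p : (∀ i, α i) → ℝ) (hp : IsDist p)
    (y : ι) (S : Finset ι) (hyS : y ∉ S)
    (W : ι) (hWS : W ∈ S)
    (hness : CondIndep p {y} {W} (S.erase W)) :
    ∃ M, MarkovBoundary p y S M ∧ W ∉ M :=
  non_essential_avoided_by_some_markov_boundary_general p y S W hWS hness

end
end
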